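/- Conditional weak typicality: let p_X be a probability distribution on a finite set 𝒳 and p_{Y|X}(·|x) a probability distribution on a finite set 𝒴 for each x ∈ 𝒳, with conditional Shannon entropy H(Y|X) = −Σ_{x,y} p_X(x) p_{Y|X}(y|x) log₂ p_{Y|X}(y|x). For every ε > 0 and δ > 0 there exists N such that for every n ≥ N, if (X₁,Y₁), …, (X_n,Y_n) are drawn i.i.d. with X_i ∼ p_X and Y_i ∼ p_{Y|X}(·|X_i), then the probability that |−(1/n) Σ_{i=1}^n log₂ p_{Y|X}(Y_i|X_i) − H(Y|X)| ≤ δ is at least 1 − ε. -/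

import Mathlib

noncomputable section
open Classical

/-- The conditional Shannon entropy
`H(Y|X) = −Σ_{x,y} p_X(x) p_{Y|X}(y|x) log₂ p_{Y|X}(y|x)` (with `0·log₂ 0 = 0`). -/
def condShannonEntropy {𝒳 𝒴 : Type*} [Fintype 𝒳] [Fintype 𝒴]
    (pX : 𝒳 → ℝ) (pYx : 𝒳 → 𝒴 → ℝ) : ℝ :=
  -∑ x, pX x * ∑ y, pYx x y * Real.logb 2 (pYx x y)

/-- Given `x^n`, a sequence `y^n` is conditionally `δ`-typical if all its letters have
positive conditional probability and the conditional sample entropy is within `δ` of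
`H(Y|X)`. -/
def IsCondTypical {𝒳 𝒴 : Type*} [Fintype 𝒳] [Fintype 𝒴]
    (pX : 𝒳 → ℝ) (pYx : 𝒳 → 𝒴 → ℝ) (δ : ℝ) {n : ℕ}
    (xs : Fin n → 𝒳) (ys : Fin n → 𝒴) : Prop :=
  (∀ i, 0 < pYx (xs i) (ys i)) ∧
    |(-(1 / (n : ℝ)) * ∑ i, Real.logb 2 (pYx (xs i) (ys i))) -
        condShannonEntropy pX pYx| ≤ δ

/-! The pairs `(Xᵢ, Yᵢ)` are i.i.d. with weight
`w (x, y) = p_X(x) p_{Y|X}(y|x)`, and the variables `−log₂ p_{Y|X}(Yᵢ|Xᵢ)` have mean `H(Y|X)`.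
Since distinct coordinates are independent, the cross terms of the second moment of a centred sum
vanish, so the sample mean has variance `σ²/n`, and Chebyshev's inequality bounds the probability
of a `δ`-deviation by `σ²/(nδ²) → 0`. -/

open Filter Finset

section ProductWeights

variable {S : Type*} [Fintype S] {n : ℕ} (w : S → ℝ)

theorem sum_prod_mul_prod_mem (hw : ∑ s, w s = 1) (g : S → ℝ) (t : Finset (Fin n)) :
    ∑ ω : Fin n → S, (∏ k, w (ω k)) * ∏ k ∈ t, g (ω k) = (∑ s, w s * g s) ^ #t := by
  have hfactor : ∀ ω : Fin n → S, (∏ k, w (ω k)) * ∏ k ∈ t, g (ω k)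
      = ∏ k, w (ω k) * if k ∈ t then g (ω k) else 1 := fun ω => by
    rw [prod_mul_distrib, Fintype.prod_ite_mem]
  have hcoord : ∀ k : Fin n, ∑ s, w s * (if k ∈ t then g s else 1)
      = if k ∈ t then ∑ s, w s * g s else 1 := fun k => by
    split_ifs <;> simp [hw]
  simp_rw [hfactor]
  rw [← Fintype.prod_sum (fun k s => w s * if k ∈ t then g s else 1)]
  simp_rw [hcoord]
  rw [Fintype.prod_ite_mem, prod_const]

theorem sum_prod_mul_sum_sq (hw : ∑ s, w s = 1) (g : S → ℝ) (hg : ∑ s, w s * g s = 0) :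
    ∑ ω : Fin n → S, (∏ k, w (ω k)) * (∑ i, g (ω i)) ^ 2 = n * ∑ s, w s * g s ^ 2 := by
  have hcross : ∀ i j : Fin n, ∑ ω : Fin n → S, (∏ k, w (ω k)) * (g (ω i) * g (ω j))
      = if i = j then ∑ s, w s * g s ^ 2 else 0 := fun i j => by
    split_ifs with hij
    · subst hij
      simp_rw [← sq]
      simpa using sum_prod_mul_prod_mem w hw (fun s => g s ^ 2) {i}
    · simpa [hij, hg] using sum_prod_mul_prod_mem w hw g {i, j}
  calc ∑ ω : Fin n → S, (∏ k, w (ω k)) * (∑ i, g (ω i)) ^ 2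
      = ∑ i, ∑ j, ∑ ω : Fin n → S, (∏ k, w (ω k)) * (g (ω i) * g (ω j)) := by
        simp_rw [sq, sum_mul_sum, mul_sum]
        rw [sum_comm]
        exact sum_congr rfl fun i _ => sum_comm
    _ = n * ∑ s, w s * g s ^ 2 := by simp [hcross]

end ProductWeights

theorem one_sub_div_sq_le_sum_ite_abs_le {Ω : Type*} [Fintype Ω] {p : Ω → ℝ}
    (hp : ∀ ω, 0 ≤ p ω) (hp1 : ∑ ω, p ω = 1) (Z : Ω → ℝ) {a : ℝ} (ha : 0 < a) :
    1 - (∑ ω, p ω * Z ω ^ 2) / a ^ 2 ≤ ∑ ω, if |Z ω| ≤ a then p ω else 0 := by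
  have hterm : ∀ ω, p ω - (if |Z ω| ≤ a then p ω else 0) ≤ p ω * Z ω ^ 2 / a ^ 2 := fun ω => by
    split_ifs with h
    · rw [sub_self]
      exact div_nonneg (mul_nonneg (hp ω) (sq_nonneg _)) (sq_nonneg _)
    · rw [sub_zero, le_div_iff₀ (by positivity)]
      have hlt : a ^ 2 < Z ω ^ 2 := by
        simpa using (sq_lt_sq₀ ha.le (abs_nonneg _)).2 (not_le.1 h)
      exact mul_le_mul_of_nonneg_left hlt.le (hp ω)
  have := sum_le_sum (s := univ) fun ω _ => hterm ω
  rw [sum_sub_distrib, hp1, ← sum_div] at this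
  linarith

theorem weak_law_of_large_numbers {S : Type*} [Fintype S] {w : S → ℝ} (hw0 : ∀ s, 0 ≤ w s)
    (hw1 : ∑ s, w s = 1) (g : S → ℝ) {ε δ : ℝ} (hε : 0 < ε) (hδ : 0 < δ) :
    ∀ᶠ n : ℕ in atTop, 1 - ε ≤ ∑ ω : Fin n → S,
      if |(∑ i, g (ω i)) / n - ∑ s, w s * g s| ≤ δ then ∏ k, w (ω k) else 0 := by
  set m := ∑ s, w s * g s
  set σ2 := ∑ s, w s * (g s - m) ^ 2 with hσ2
  have hcentered : ∑ s, w s * (g s - m) = 0 := by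
    simp [m, mul_sub, sum_sub_distrib, ← sum_mul, hw1]
  filter_upwards [(tendsto_const_div_atTop_nhds_zero_nat (σ2 / δ ^ 2)).eventually_lt_const hε,
    eventually_ne_atTop 0] with n hσ hn
  have hmean : ∀ ω : Fin n → S, (∑ i, g (ω i)) / n - m = (∑ i, (g (ω i) - m)) / n := fun ω => by
    rw [sum_sub_distrib, sum_const, card_univ, Fintype.card_fin, nsmul_eq_mul]
    field_simp
  have hvar : ∑ ω : Fin n → S, (∏ k, w (ω k)) * ((∑ i, g (ω i)) / n - m) ^ 2
      = σ2 / n := by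
    simp_rw [hmean, div_pow, mul_div_assoc']
    rw [← sum_div, sum_prod_mul_sum_sq w hw1 _ hcentered, ← hσ2]
    field_simp
  have hW0 : ∀ ω : Fin n → S, 0 ≤ ∏ k, w (ω k) := fun ω => prod_nonneg fun k _ => hw0 _
  have hW1 : ∑ ω : Fin n → S, ∏ k, w (ω k) = 1 := by
    simpa using sum_prod_mul_prod_mem w hw1 (fun _ => 1) ∅
  calc 1 - ε ≤ 1 - σ2 / δ ^ 2 / n := by linarith
    _ = 1 - (∑ ω : Fin n → S, (∏ k, w (ω k)) * ((∑ i, g (ω i)) / n - m) ^ 2) / δ ^ 2 := by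
        rw [hvar, div_right_comm]
    _ ≤ _ := one_sub_div_sq_le_sum_ite_abs_le hW0 hW1 _ hδ

theorem sum_pi_sum_pi_eq_sum_pi_prod {ι α β M : Type*} [Fintype ι] [DecidableEq ι] [Fintype α]
    [Fintype β] [AddCommMonoid M] (F : (ι → α) → (ι → β) → M) :
    ∑ xs, ∑ ys, F xs ys = ∑ ω : ι → α × β, F (fun i => (ω i).1) (fun i => (ω i).2) := by
  rw [← Fintype.sum_prod_type']
  exact (Fintype.sum_equiv (Equiv.arrowProdEquivProdArrow _ _ _) _ _ fun _ => rfl).symm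

theorem ite_isCondTypical_eq {𝒳 𝒴 : Type*} [Fintype 𝒳] [Fintype 𝒴] (pX : 𝒳 → ℝ)
    {pYx : 𝒳 → 𝒴 → ℝ} (hpYx : ∀ x y, 0 ≤ pYx x y) (δ : ℝ) {n : ℕ}
    (xs : Fin n → 𝒳) (ys : Fin n → 𝒴) :
    (if IsCondTypical pX pYx δ xs ys then ∏ i, pX (xs i) * pYx (xs i) (ys i) else 0) =
      if |(-(1 / (n : ℝ)) * ∑ i, Real.logb 2 (pYx (xs i) (ys i))) -
          condShannonEntropy pX pYx| ≤ δ
      then ∏ i, pX (xs i) * pYx (xs i) (ys i) else 0 := by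
  -- where the positivity clause of `IsCondTypical` fails, the weight vanishes
  by_cases hpos : ∀ i, 0 < pYx (xs i) (ys i)
  · simp only [IsCondTypical, hpos, implies_true, true_and]
  · obtain ⟨i, hi⟩ := not_forall.1 hpos
    have hzero : ∏ i, pX (xs i) * pYx (xs i) (ys i) = 0 :=
      prod_eq_zero (mem_univ i) (by rw [le_antisymm (not_lt.1 hi) (hpYx _ _), mul_zero])
    simp only [hzero, ite_self]

/-- **Conditional weak typicality**: if `(Xᵢ, Yᵢ)` are drawn i.i.d. with `Xᵢ ∼ p_X` and
`Yᵢ ∼ p_{Y|X}(·|Xᵢ)`, then for every `ε, δ > 0` there is `N` such that for all `n ≥ N`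
the probability that `Y^n` is conditionally `δ`-typical given `X^n` is at least `1 − ε`. -/
theorem conditional_weak_typicality {𝒳 𝒴 : Type*} [Fintype 𝒳] [Fintype 𝒴]
    (pX : 𝒳 → ℝ) (hpX : ∀ x, 0 ≤ pX x) (hpX1 : ∑ x, pX x = 1)
    (pYx : 𝒳 → 𝒴 → ℝ) (hpYx : ∀ x y, 0 ≤ pYx x y) (hpYx1 : ∀ x, ∑ y, pYx x y = 1)
    (ε δ : ℝ) (hε : 0 < ε) (hδ : 0 < δ) :
    ∃ N : ℕ, ∀ n ≥ N,
      1 - ε ≤ ∑ xs : Fin n → 𝒳, ∑ ys : Fin n → 𝒴,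
        (if IsCondTypical pX pYx δ xs ys then ∏ i, pX (xs i) * pYx (xs i) (ys i)
         else 0) := by
  set w : 𝒳 × 𝒴 → ℝ := fun s => pX s.1 * pYx s.1 s.2
  set g : 𝒳 × 𝒴 → ℝ := fun s => -Real.logb 2 (pYx s.1 s.2)
  have hw0 : ∀ s, 0 ≤ w s := fun s => mul_nonneg (hpX _) (hpYx _ _)
  have hw1 : ∑ s, w s = 1 := by
    simp [w, Fintype.sum_prod_type, ← mul_sum, hpYx1, hpX1]
  have hH : ∑ s, w s * g s = condShannonEntropy pX pYx := by
    simp [w, g, condShannonEntropy, Fintype.sum_prod_type, mul_sum, mul_assoc]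
  obtain ⟨N, hN⟩ := eventually_atTop.1 (weak_law_of_large_numbers hw0 hw1 g hε hδ)
  refine ⟨N, fun n hn => (hN n hn).trans_eq ?_⟩
  rw [hH, sum_pi_sum_pi_eq_sum_pi_prod]
  refine sum_congr rfl fun ω _ => ?_
  rw [ite_isCondTypical_eq pX hpYx]
  simp [g, w, sum_neg_distrib, div_eq_inv_mul]
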